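/- For every n-by-n reciprocal matrix A, the set E(A) of efficient vectors for A is PWL connected. -/

import Mathlib

def PosVec {ι : Type*} (w : ι → ℝ) : Prop := ∀ i, 0 < w i

def IsReciprocal {ι : Type*} (A : Matrix ι ι ℝ) : Prop :=
  (∀ i j, 0 < A i j) ∧ ∀ i j, A j i = 1 / A i j

def IsEfficient {ι : Type*} (A : Matrix ι ι ℝ) (w : ι → ℝ) : Prop :=
  PosVec w ∧ ∀ v : ι → ℝ, PosVec v →
    (∀ i j, |A i j - v i / v j| ≤ |A i j - w i / w j|) →
    ∃ c : ℝ, 0 < c ∧ v = c • w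

/-- The principal submatrix `A(k)` of `A` obtained by deleting row and column `k`. -/
def delMat {n : ℕ} (A : Matrix (Fin n) (Fin n) ℝ) (k : Fin n) :
    Matrix {i : Fin n // i ≠ k} {i : Fin n // i ≠ k} ℝ :=
  Matrix.of fun a b => A a.1 b.1

/-- The vector `w(k)` obtained from `w` by deleting the `k`-th entry. -/
def delVec {n : ℕ} (w : Fin n → ℝ) (k : Fin n) : {i : Fin n // i ≠ k} → ℝ :=
  fun a => w a.1

/-- `E(A)`, the set of efficient vectors for `A`. -/
def Eset {ι : Type*} (A : Matrix ι ι ℝ) : Set (ι → ℝ) := {w | IsEfficient A w}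

/-- `E(A; i)`, the set of efficient vectors `w` for `A` such that `w(i)` is efficient
for `A(i)`. -/
def EsetSub {n : ℕ} (A : Matrix (Fin n) (Fin n) ℝ) (i : Fin n) : Set (Fin n → ℝ) :=
  {w | IsEfficient A w ∧ IsEfficient (delMat A i) (delVec w i)}

/-- A set `S` of vectors is PWL (piecewise linearly) connected if any two of its points are
joined by a finite polygonal path whose vertices and segments all lie in `S`. -/
def PWLConnected {ι : Type*} (S : Set (ι → ℝ)) : Prop :=
  ∀ x ∈ S, ∀ y ∈ S, ∃ (s : ℕ) (u : ℕ → ι → ℝ), u 0 = x ∧ u s = y ∧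
    (∀ i ≤ s, u i ∈ S) ∧
    ∀ i < s, ∀ t : ℝ, 0 < t → t < 1 → (t • u i + (1 - t) • u (i + 1)) ∈ S

/-!
By the criterion of Blanquero, Carrizosa and Conde, a positive `w` is efficient for `A` iff the
digraph with an arc `i → j` whenever `w i ≤ A i j * w j` is strongly connected. Hence, for a
strongly connected `D`, the convex cone of positive vectors satisfying these inequalities along
the arcs of `D` lies in `E(A)`.

Every efficient `w` is joined to every column `A · r`, by induction on the size of `A`. Inside the
cone of its own digraph, `w` is joined by a segment to a vector `p` whose tight arcs
(`p i = A i j * p j`) form a connected graph. Deleting a vertex `k ≠ r` that keeps this graph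
connected leaves a vector efficient for `A(k)`. Changing `p k` into `A k r * p r` moves along a
segment of `E(A)`, and the path of `E(A(k))` from `p(k)` to the column `r` given by induction
lifts to `E(A)` by giving the `k`-th entry the value that keeps the arcs between `k` and `r`
tight.
-/

open Relation Set

variable {ι : Type*} {A : Matrix ι ι ℝ}

theorem IsReciprocal.pos (hA : IsReciprocal A) (i j : ι) : 0 < A i j := hA.1 i j

theorem IsReciprocal.mul_swap (hA : IsReciprocal A) (i j : ι) : A i j * A j i = 1 := by
  rw [hA.2 i j, mul_one_div_cancel (hA.pos i j).ne']

theorem IsReciprocal.diag (hA : IsReciprocal A) (i : ι) : A i i = 1 := by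
  nlinarith [hA.mul_swap i i, hA.pos i i]

theorem IsReciprocal.le_mul_iff (hA : IsReciprocal A) {i j : ι} {x y : ℝ} :
    x ≤ A i j * y ↔ A j i * x ≤ y := by
  rw [← mul_le_mul_iff_of_pos_left (hA.pos j i), ← mul_assoc, mul_comm (A j i), hA.mul_swap,
    one_mul]

theorem IsReciprocal.submatrix {κ : Type*} (hA : IsReciprocal A) (f : κ → ι) :
    IsReciprocal (A.submatrix f f) :=
  ⟨fun _ _ => hA.1 _ _, fun _ _ => hA.2 _ _⟩

theorem Relation.ReflTransGen.exists_rel_of_mem_of_notMem {r : ι → ι → Prop} {C : Set ι}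
    {a b : ι} (h : ReflTransGen r a b) (ha : a ∈ C) (hb : b ∉ C) :
    ∃ i ∈ C, ∃ j ∉ C, r i j := by
  induction h with
  | refl => exact absurd ha hb
  | @tail c d _ hcd ih =>
    by_cases hc : c ∈ C
    · exact ⟨c, hc, d, hb, hcd⟩
    · exact ih hc

def StronglyConnected (r : ι → ι → Prop) : Prop := ∀ i j, ReflTransGen r i j

theorem StronglyConnected.mono {r s : ι → ι → Prop} (hr : StronglyConnected r)
    (h : ∀ i j, r i j → s i j) : StronglyConnected s :=
  fun i j => ReflTransGen.mono h i j (hr i j)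

/-- The arcs of the digraph `G(A, w)`. -/
def effArc (A : Matrix ι ι ℝ) (w : ι → ℝ) (i j : ι) : Prop := w i ≤ A i j * w j

theorem isEfficient_of_stronglyConnected {w : ι → ℝ} (hw : PosVec w)
    (hG : StronglyConnected (effArc A w)) : IsEfficient A w := by
  refine ⟨hw, fun v hv hcmp => ?_⟩
  have arc : ∀ i j, effArc A w i j → v j / w j ≤ v i / w i := by
    intro i j hij
    have h1 : w i / w j ≤ A i j := (div_le_iff₀ (hw j)).2 hij
    have h2 := (le_abs_self _).trans ((hcmp i j).trans_eq (abs_of_nonneg (sub_nonneg.2 h1)))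
    have h3 : w i / w j ≤ v i / v j := by linarith
    rw [div_le_div_iff₀ (hw j) (hv j)] at h3
    rw [div_le_div_iff₀ (hw j) (hw i)]
    linarith
  have path : ∀ i j, ReflTransGen (effArc A w) i j → v j / w j ≤ v i / w i := by
    intro i j h
    induction h with
    | refl => exact le_rfl
    | tail _ h ih => exact (arc _ _ h).trans ih
  rcases isEmpty_or_nonempty ι with hι | ⟨⟨i₀⟩⟩
  · exact ⟨1, one_pos, Subsingleton.elim _ _⟩
  refine ⟨v i₀ / w i₀, div_pos (hv i₀) (hw i₀), funext fun i => ?_⟩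
  rw [Pi.smul_apply, smul_eq_mul, ← le_antisymm (path i₀ i (hG i₀ i)) (path i i₀ (hG i i₀)),
    div_mul_cancel₀ _ (hw i).ne']

theorem exists_one_lt_mul_le_of_lt {κ : Type*} [Finite κ] [Nonempty κ] {a b : κ → ℝ}
    (ha : ∀ k, 0 < a k) (hab : ∀ k, a k < b k) :
    ∃ s, 1 < s ∧ (∀ k, s * a k ≤ b k) ∧ ∃ k, s * a k = b k := by
  obtain ⟨k₀, hk₀⟩ := Finite.exists_min fun k => b k / a k
  refine ⟨b k₀ / a k₀, (one_lt_div (ha k₀)).2 (hab k₀), fun k => ?_, k₀,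
    div_mul_cancel₀ _ (ha k₀).ne'⟩
  rw [← le_div_iff₀ (ha k)]
  exact hk₀ k

open Classical in
noncomputable def scaleOn (C : Set ι) (s : ℝ) (w : ι → ℝ) : ι → ℝ :=
  fun i => if i ∈ C then s * w i else w i

section scaleOn

variable {C : Set ι} {s : ℝ} {w : ι → ℝ} {i : ι}

theorem scaleOn_of_mem (hi : i ∈ C) : scaleOn C s w i = s * w i := if_pos hi

theorem scaleOn_of_notMem (hi : i ∉ C) : scaleOn C s w i = w i := if_neg hi

theorem PosVec.scaleOn (hw : PosVec w) (hs : 0 < s) : PosVec (scaleOn C s w) := fun i => by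
  by_cases hi : i ∈ C
  · rw [scaleOn_of_mem hi]; exact mul_pos hs (hw i)
  · rw [scaleOn_of_notMem hi]; exact hw i

end scaleOn

theorem IsEfficient.stronglyConnected [Finite ι] (hA : IsReciprocal A) {w : ι → ℝ}
    (hw : IsEfficient A w) : StronglyConnected (effArc A w) := by
  by_contra hG
  obtain ⟨i₀, j₀, hj₀⟩ : ∃ i₀ j₀, ¬ReflTransGen (effArc A w) i₀ j₀ := by
    simpa [StronglyConnected] using hG
  set U := {j | ¬ReflTransGen (effArc A w) i₀ j}
  have hU : ∀ i ∉ U, ∀ j ∈ U, A i j * w j < w i :=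
    fun i hi j hj => lt_of_not_ge fun h => hj ((not_not.1 hi).tail h)
  have : Nonempty {q : ι × ι // q.1 ∉ U ∧ q.2 ∈ U} := ⟨⟨(i₀, j₀), not_not.2 .refl, hj₀⟩⟩
  obtain ⟨s, hs1, hs, -⟩ := exists_one_lt_mul_le_of_lt
    (a := fun q : {q : ι × ι // q.1 ∉ U ∧ q.2 ∈ U} => A q.1.1 q.1.2 * w q.1.2)
    (fun q => mul_pos (hA.pos _ _) (hw.1 _)) (fun q => hU _ q.2.1 _ q.2.2)
  have hs' : ∀ i ∉ U, ∀ j ∈ U, s * (A i j * w j) ≤ w i := fun i hi j hj => hs ⟨(i, j), hi, hj⟩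
  -- Scaling the unreachable part moves every ratio `w i / w j` towards `A i j`.
  have closer : ∀ i j, scaleOn U s w i / scaleOn U s w j ∈ uIcc (w i / w j) (A i j) := by
    intro i j
    have hwi := hw.1 i
    have hwj := hw.1 j
    by_cases hi : i ∈ U <;> by_cases hj : j ∈ U
    · rw [scaleOn_of_mem hi, scaleOn_of_mem hj, mul_div_mul_left _ _ (by positivity)]
      exact left_mem_uIcc
    · rw [scaleOn_of_mem hi, scaleOn_of_notMem hj, mem_uIcc]
      refine Or.inl ⟨div_le_div_of_nonneg_right (le_mul_of_one_le_left hwi.le hs1.le) hwj.le,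
        (div_le_iff₀ hwj).2 (hA.le_mul_iff.2 ?_)⟩
      linarith [hs' j hj i hi]
    · rw [scaleOn_of_notMem hi, scaleOn_of_mem hj, mem_uIcc]
      refine Or.inr ⟨(le_div_iff₀ (by positivity)).2 (by linarith [hs' i hi j hj]), ?_⟩
      exact div_le_div_of_nonneg_left hwi.le hwj (le_mul_of_one_le_left hwj.le hs1.le)
    · rw [scaleOn_of_notMem hi, scaleOn_of_notMem hj]
      exact left_mem_uIcc
  obtain ⟨c, -, hc⟩ := hw.2 _ (hw.1.scaleOn (by positivity))
    fun i j => abs_sub_right_of_mem_uIcc (closer i j)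
  have h₀ := congrFun hc i₀
  have h₁ := congrFun hc j₀
  rw [scaleOn_of_notMem (not_not.2 .refl), Pi.smul_apply, smul_eq_mul] at h₀
  rw [scaleOn_of_mem hj₀, Pi.smul_apply, smul_eq_mul] at h₁
  have hc1 : c = 1 := by nlinarith [hw.1 i₀]
  subst hc1
  nlinarith [hw.1 j₀]

def arcCone (A : Matrix ι ι ℝ) (D : ι → ι → Prop) : Set (ι → ℝ) :=
  {v | PosVec v ∧ ∀ i j, D i j → effArc A v i j}

theorem convex_arcCone (D : ι → ι → Prop) : Convex ℝ (arcCone A D) := by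
  rintro x ⟨hx, hxD⟩ y ⟨hy, hyD⟩ a b ha hb hab
  refine ⟨fun i => ?_, fun i j hij => ?_⟩
  · exact convex_Ioi (0 : ℝ) (hx i) (hy i) ha hb hab
  · have hx' := hxD i j hij
    have hy' := hyD i j hij
    simp only [effArc, Pi.add_apply, Pi.smul_apply, smul_eq_mul] at hx' hy' ⊢
    nlinarith [mul_le_mul_of_nonneg_left hx' ha, mul_le_mul_of_nonneg_left hy' hb]

theorem arcCone_subset_Eset {D : ι → ι → Prop} (hD : StronglyConnected D) :
    arcCone A D ⊆ Eset A :=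
  fun _ hv => isEfficient_of_stronglyConnected hv.1 (hD.mono hv.2)

theorem segment_subset_Eset_of_subsingleton [Subsingleton ι] {x y : ι → ℝ} (hx : PosVec x)
    (hy : PosVec y) : segment ℝ x y ⊆ Eset A := by
  have hD : StronglyConnected fun _ _ : ι => False :=
    fun i j => Subsingleton.elim i j ▸ ReflTransGen.refl
  exact ((convex_arcCone _).segment_subset ⟨hx, fun _ _ => False.elim⟩
    ⟨hy, fun _ _ => False.elim⟩).trans (arcCone_subset_Eset hD)

def tightArc (A : Matrix ι ι ℝ) (p : ι → ℝ) (i j : ι) : Prop := p i = A i j * p j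

theorem tightArc_symm (hA : IsReciprocal A) (p : ι → ℝ) : Std.Symm (tightArc A p) :=
  ⟨fun i j (h : p i = A i j * p j) => show p j = A j i * p i by
    rw [h, ← mul_assoc, hA.mul_swap j i, one_mul]⟩

theorem scaleOn_mem_arcCone (hA : IsReciprocal A) {D : ι → ι → Prop} {p : ι → ℝ}
    (hp : p ∈ arcCone A D) {C : Set ι} {s : ℝ} (hs : 1 ≤ s)
    (hcross : ∀ i ∈ C, ∀ j ∉ C, D i j → s * p i ≤ A i j * p j) :
    scaleOn C s p ∈ arcCone A D := by
  refine ⟨hp.1.scaleOn (by linarith), fun i j hij => ?_⟩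
  have h := hp.2 i j hij
  have hAij := hA.pos i j
  have hpj := hp.1 j
  unfold effArc at h ⊢
  by_cases hi : i ∈ C <;> by_cases hj : j ∈ C
  · rw [scaleOn_of_mem hi, scaleOn_of_mem hj, mul_left_comm]
    exact mul_le_mul_of_nonneg_left h (by linarith)
  · rw [scaleOn_of_mem hi, scaleOn_of_notMem hj]
    exact hcross i hi j hj hij
  · rw [scaleOn_of_notMem hi, scaleOn_of_mem hj]
    nlinarith [mul_nonneg (mul_pos hAij hpj).le (sub_nonneg.2 hs)]
  · rw [scaleOn_of_notMem hi, scaleOn_of_notMem hj]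
    exact h

/-- Scale the tight component of `i₀` by the least factor making an arc of `D` leaving it
tight. -/
theorem exists_tight_component_ssubset [Finite ι] (hA : IsReciprocal A) {D : ι → ι → Prop}
    (hD : StronglyConnected D) {p : ι → ℝ} (hp : p ∈ arcCone A D) {i₀ j₁ : ι}
    (hj₁ : ¬ReflTransGen (tightArc A p) i₀ j₁) :
    ∃ q ∈ arcCone A D,
      {j | ReflTransGen (tightArc A p) i₀ j} ⊂ {j | ReflTransGen (tightArc A q) i₀ j} := by
  set C := {j | ReflTransGen (tightArc A p) i₀ j}
  obtain ⟨a, ha, b, hb, hab⟩ :=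
    (hD i₀ j₁).exists_rel_of_mem_of_notMem (show i₀ ∈ C from ReflTransGen.refl) hj₁
  have slack : ∀ i ∈ C, ∀ j ∉ C, D i j → p i < A i j * p j :=
    fun i hi j hj hij => (hp.2 i j hij).lt_of_ne fun h => hj (ReflTransGen.tail hi h)
  have : Nonempty {q : ι × ι // q.1 ∈ C ∧ q.2 ∉ C ∧ D q.1 q.2} := ⟨⟨(a, b), ha, hb, hab⟩⟩
  obtain ⟨s, hs1, hs, ⟨⟨⟨i, j⟩, hi, hj, _⟩, hij⟩⟩ := exists_one_lt_mul_le_of_lt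
    (b := fun q : {q : ι × ι // q.1 ∈ C ∧ q.2 ∉ C ∧ D q.1 q.2} => A q.1.1 q.1.2 * p q.1.2)
    (fun q => hp.1 _) (fun q => slack _ q.2.1 _ q.2.2.1 q.2.2.2)
  have preserve : ∀ j ∈ C, ReflTransGen (tightArc A (scaleOn C s p)) i₀ j := by
    intro j hj
    induction hj with
    | refl => exact ReflTransGen.refl
    | @tail b c hb hbc ih =>
      refine ih.tail ?_
      rw [tightArc, scaleOn_of_mem (C := C) hb, scaleOn_of_mem (C := C) (hb.tail hbc), hbc,
        mul_left_comm]
  refine ⟨scaleOn C s p, scaleOn_mem_arcCone hA hp hs1.le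
    (fun i hi j hj hij => hs ⟨(i, j), hi, hj, hij⟩), preserve, fun hsub => hj (hsub ?_)⟩
  refine (preserve i hi).tail ?_
  rw [tightArc, scaleOn_of_mem hi, scaleOn_of_notMem hj]
  exact hij

theorem exists_tight_stronglyConnected [Finite ι] (hA : IsReciprocal A) {D : ι → ι → Prop}
    (hD : StronglyConnected D) {p : ι → ℝ} (hp : p ∈ arcCone A D) :
    ∃ q ∈ arcCone A D, StronglyConnected (tightArc A q) := by
  rcases isEmpty_or_nonempty ι with hι | ⟨⟨i₀⟩⟩
  · exact ⟨p, hp, fun i => isEmptyElim i⟩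
  let size : (ι → ℝ) → ℕ := fun q => {j | ReflTransGen (tightArc A q) i₀ j}.ncard
  obtain ⟨q, hq, hmax⟩ : ∃ q ∈ arcCone A D, ∀ q' ∈ arcCone A D, size q' ≤ size q := by
    have hbdd : BddAbove (size '' arcCone A D) :=
      ⟨Nat.card ι, by rintro _ ⟨q, -, rfl⟩; exact ncard_le_card _⟩
    obtain ⟨q, hq, hsize⟩ := Nat.sSup_mem (s := size '' arcCone A D) ⟨size p, p, hp, rfl⟩ hbdd
    exact ⟨q, hq, fun q' hq' => hsize ▸ le_csSup hbdd ⟨q', hq', rfl⟩⟩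
  have hconn : ∀ j, ReflTransGen (tightArc A q) i₀ j := by
    by_contra! ⟨j, hj⟩
    obtain ⟨q', hq', hlt⟩ := exists_tight_component_ssubset hA hD hq hj
    exact (ncard_lt_ncard hlt).not_ge (hmax q' hq')
  have := tightArc_symm hA q
  exact ⟨q, hq, fun i j => (symm (hconn i)).trans (hconn j)⟩

theorem StronglyConnected.exists_ne_stronglyConnected_subtype [Finite ι] [Nontrivial ι]
    {r : ι → ι → Prop} (hsymm : Std.Symm r) (hr : StronglyConnected r) (i₀ : ι) :
    ∃ k ≠ i₀, StronglyConnected fun a b : {i // i ≠ k} => r a b := by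
  classical
  have := Fintype.ofFinite ι
  have hconn : (SimpleGraph.fromRel r).Connected := by
    refine ⟨fun i j => ?_⟩
    induction hr i j with
    | refl => rfl
    | @tail b c _ hbc ih =>
      by_cases h : b = c
      · exact h ▸ ih
      · exact ih.trans (SimpleGraph.Adj.reachable ⟨h, Or.inl hbc⟩)
  obtain ⟨T, hTle, hT⟩ := hconn.exists_isTree_le
  obtain ⟨u, v, huv, hu, hv⟩ := hT.exists_ne_and_degree_eq_one
  obtain ⟨k, hk, hdeg⟩ : ∃ k ≠ i₀, T.degree k = 1 := by
    by_cases hu₀ : u = i₀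
    · exact ⟨v, hu₀ ▸ huv.symm, hv⟩
    · exact ⟨u, hu₀, hu⟩
  refine ⟨k, hk, fun a b => ?_⟩
  refine ReflTransGen.mono (fun x y hxy => ?_) a b
    ((SimpleGraph.reachable_iff_reflTransGen _ _).1
      ((hT.connected.induce_compl_singleton_of_degree_eq_one hdeg).preconnected a b))
  exact ((SimpleGraph.fromRel_adj _ _ _).1 (hTle hxy)).2.elim id (hsymm.symm _ _)

theorem isEfficient_of_submatrix [Finite ι] (hA : IsReciprocal A) {k : ι} {w : ι → ℝ}
    (hsub : IsEfficient (A.submatrix (Subtype.val : {i // i ≠ k} → ι) Subtype.val)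
      (w ∘ Subtype.val))
    (hk : 0 < w k) (hin : ∃ j ≠ k, effArc A w j k) (hout : ∃ j ≠ k, effArc A w k j) :
    IsEfficient A w := by
  obtain ⟨j₀, hj₀, hin⟩ := hin
  obtain ⟨j₁, hj₁, hout⟩ := hout
  have hpos : PosVec w := fun i => by
    by_cases h : i = k
    · exact h ▸ hk
    · exact hsub.1 ⟨i, h⟩
  have lift : ∀ a b : {i // i ≠ k}, ReflTransGen (effArc A w) a b :=
    fun a b => ((hsub.stronglyConnected (hA.submatrix _)) a b).lift Subtype.val fun _ _ h => h
  refine isEfficient_of_stronglyConnected hpos fun i j => ?_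
  by_cases hi : i = k <;> by_cases hj : j = k
  · exact hi ▸ hj ▸ ReflTransGen.refl
  · exact hi ▸ (ReflTransGen.single hout).trans (lift ⟨j₁, hj₁⟩ ⟨j, hj⟩)
  · exact hj ▸ (lift ⟨i, hi⟩ ⟨j₀, hj₀⟩).tail hin
  · exact lift ⟨i, hi⟩ ⟨j, hj⟩

theorem IsEfficient.exists_effArc_ne [Finite ι] (hA : IsReciprocal A) {w : ι → ℝ}
    (hw : IsEfficient A w) {j k : ι} (hjk : j ≠ k) :
    (∃ i ≠ k, effArc A w i k) ∧ ∃ i ≠ k, effArc A w k i := by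
  have hG := hw.stronglyConnected hA
  obtain ⟨i, hi, k', hk', hik⟩ :=
    (hG j k).exists_rel_of_mem_of_notMem (C := {k}ᶜ) hjk (not_not.2 rfl)
  obtain ⟨k'', hk'', i', hi', hki'⟩ :=
    (hG k j).exists_rel_of_mem_of_notMem (C := {k}) rfl hjk
  rw [notMem_compl_iff, mem_singleton_iff] at hk'
  rw [mem_singleton_iff] at hk''
  exact ⟨⟨i, hi, hk' ▸ hik⟩, i', hi', hk'' ▸ hki'⟩

section extendTight

variable [DecidableEq ι] {k r : ι}

def extendTight (A : Matrix ι ι ℝ) (hrk : r ≠ k) : ({i // i ≠ k} → ℝ) →ₗ[ℝ] ι → ℝ where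
  toFun u i := if h : i = k then A k r * u ⟨r, hrk⟩ else u ⟨i, h⟩
  map_add' u v := by
    funext i
    by_cases h : i = k <;> simp [h, mul_add]
  map_smul' c u := by
    funext i
    by_cases h : i = k <;> simp [h, mul_left_comm]

theorem extendTight_apply_self (hrk : r ≠ k) (u : {i // i ≠ k} → ℝ) :
    extendTight A hrk u k = A k r * u ⟨r, hrk⟩ := dif_pos rfl

theorem extendTight_apply_of_ne (hrk : r ≠ k) (u : {i // i ≠ k} → ℝ) {i : ι} (hi : i ≠ k) :
    extendTight A hrk u i = u ⟨i, hi⟩ := dif_neg hi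

theorem extendTight_comp_val (hrk : r ≠ k) (u : {i // i ≠ k} → ℝ) :
    extendTight A hrk u ∘ Subtype.val = u :=
  funext fun a => extendTight_apply_of_ne hrk u a.2

theorem extendTight_comp_val_eq_update (hrk : r ≠ k) (p : ι → ℝ) :
    extendTight A hrk (p ∘ Subtype.val) = Function.update p k (A k r * p r) := by
  funext i
  by_cases hi : i = k
  · subst hi
    rw [extendTight_apply_self, Function.update_self]
    rfl
  · rw [extendTight_apply_of_ne hrk _ hi, Function.update_of_ne hi]
    rfl

theorem extendTight_column (hA : IsReciprocal A) (hrk : r ≠ k) :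
    extendTight A hrk (fun a => A.submatrix Subtype.val (Subtype.val : {i // i ≠ k} → ι) a
      ⟨r, hrk⟩) = fun i => A i r := by
  funext i
  by_cases hi : i = k
  · subst hi
    rw [extendTight_apply_self, Matrix.submatrix_apply, hA.diag, mul_one]
  · exact extendTight_apply_of_ne hrk _ hi

theorem extendTight_mem_Eset [Finite ι] (hA : IsReciprocal A) (hrk : r ≠ k)
    {u : {i // i ≠ k} → ℝ} (hu : u ∈ Eset (A.submatrix Subtype.val Subtype.val)) :
    extendTight A hrk u ∈ Eset A := by
  have hur := hu.1 ⟨r, hrk⟩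
  refine isEfficient_of_submatrix hA (by rwa [extendTight_comp_val]) ?_ ⟨r, hrk, ?_⟩
    ⟨r, hrk, ?_⟩
  · rw [extendTight_apply_self]
    exact mul_pos (hA.pos k r) hur
  · rw [effArc, extendTight_apply_self, extendTight_apply_of_ne hrk _ hrk, ← mul_assoc,
      hA.mul_swap, one_mul]
  · rw [effArc, extendTight_apply_self, extendTight_apply_of_ne hrk _ hrk]

theorem reflTransGen_segment_extendTight [Finite ι] (hA : IsReciprocal A) (hrk : r ≠ k)
    {u v : {i // i ≠ k} → ℝ}
    (h : ReflTransGen (fun x y => segment ℝ x y ⊆ Eset (A.submatrix Subtype.val Subtype.val)) u v) :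
    ReflTransGen (fun x y => segment ℝ x y ⊆ Eset A) (extendTight A hrk u) (extendTight A hrk v) :=
  h.lift (extendTight A hrk) fun x y hxy => by
    show segment ℝ _ _ ⊆ Eset A
    rw [← LinearMap.coe_toAffineMap, ← image_segment]
    exact image_subset_iff.2 fun z hz => extendTight_mem_Eset hA hrk (hxy hz)

end extendTight

theorem segment_update_subset_Eset [Finite ι] [DecidableEq ι] (hA : IsReciprocal A) {p : ι → ℝ}
    (hp : IsEfficient A p) {k r : ι} (hrk : r ≠ k)
    (hpk : IsEfficient (A.submatrix (Subtype.val : {i // i ≠ k} → ι) Subtype.val)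
      (p ∘ Subtype.val)) :
    segment ℝ p (Function.update p k (A k r * p r)) ⊆ Eset A := by
  obtain ⟨⟨j₀, hj₀, hin⟩, j₁, hj₁, hout⟩ := hp.exists_effArc_ne hA hrk
  rintro q ⟨a, b, ha, hb, hab, rfl⟩
  set c := A k r * p r
  have off : ∀ i ≠ k, (a • p + b • Function.update p k c) i = p i := by
    intro i hi
    simp only [Pi.add_apply, Pi.smul_apply, smul_eq_mul, Function.update_of_ne hi]
    rw [← add_mul, hab, one_mul]
  have hqk : (a • p + b • Function.update p k c) k ∈ uIcc (p k) c := by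
    rw [← segment_eq_uIcc]
    exact ⟨a, b, ha, hb, hab, by simp⟩
  generalize a • p + b • Function.update p k c = q at off hqk
  have hpk' : IsEfficient (A.submatrix Subtype.val Subtype.val) (q ∘ Subtype.val) :=
    (funext fun i : {i // i ≠ k} => (off i i.2).symm : p ∘ Subtype.val = q ∘ Subtype.val) ▸ hpk
  -- the new height `q k` lies between the admissible heights `p k` and `c`
  rcases le_total (p k) c with h | h
  · rw [uIcc_of_le h] at hqk
    refine isEfficient_of_submatrix hA hpk' ((hp.1 k).trans_le hqk.1) ⟨j₀, hj₀, ?_⟩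
      ⟨r, hrk, ?_⟩
    · rw [effArc, off _ hj₀]
      exact hin.trans (mul_le_mul_of_nonneg_left hqk.1 (hA.pos _ _).le)
    · rw [effArc, off _ hrk]
      exact hqk.2
  · rw [uIcc_of_ge h] at hqk
    refine isEfficient_of_submatrix hA hpk'
      ((mul_pos (hA.pos k r) (hp.1 r)).trans_le hqk.1) ⟨r, hrk, ?_⟩ ⟨j₁, hj₁, ?_⟩
    · rw [effArc, off _ hrk, hA.le_mul_iff]
      exact hqk.1
    · rw [effArc, off _ hj₁]
      exact hqk.2.trans hout

theorem reflTransGen_segment_column [Finite ι] (hA : IsReciprocal A) {w : ι → ℝ}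
    (hw : w ∈ Eset A) (r : ι) :
    ReflTransGen (fun x y => segment ℝ x y ⊆ Eset A) w (fun i => A i r) := by
  obtain ⟨n, hn⟩ : ∃ n, Nat.card ι = n := ⟨_, rfl⟩
  induction n using Nat.strong_induction_on generalizing ι with
  | _ n ih =>
  rcases subsingleton_or_nontrivial ι with hι | hι
  · exact .single (segment_subset_Eset_of_subsingleton hw.1 fun i => hA.pos i r)
  classical
  have hG := hw.stronglyConnected hA
  have hw' : w ∈ arcCone A (effArc A w) := ⟨hw.1, fun _ _ h => h⟩
  obtain ⟨p, hp, hT⟩ := exists_tight_stronglyConnected hA hG hw'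
  obtain ⟨k, hkr, hTk⟩ := hT.exists_ne_stronglyConnected_subtype (tightArc_symm hA p) r
  have hrk := hkr.symm
  have hpk : p ∘ Subtype.val ∈ Eset (A.submatrix (Subtype.val : {i // i ≠ k} → ι) Subtype.val) :=
    isEfficient_of_stronglyConnected (fun a => hp.1 a) (hTk.mono fun a b h => h.le)
  have hpath := reflTransGen_segment_extendTight hA hrk
    (ih _ (hn ▸ Finite.card_subtype_lt (not_not.2 rfl)) (hA.submatrix _) hpk ⟨r, hrk⟩ rfl)
  rw [extendTight_comp_val_eq_update, extendTight_column hA hrk] at hpath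
  have hwp := ((convex_arcCone _).segment_subset hw' hp).trans (arcCone_subset_Eset hG)
  exact .head hwp (.head (segment_update_subset_Eset hA (arcCone_subset_Eset hG hp) hrk hpk)
    hpath)

theorem exists_polygonal_path_of_reflTransGen {S : Set (ι → ℝ)} {x y : ι → ℝ} (hx : x ∈ S)
    (h : ReflTransGen (fun x y => segment ℝ x y ⊆ S) x y) :
    ∃ (s : ℕ) (u : ℕ → ι → ℝ), u 0 = x ∧ u s = y ∧ (∀ i ≤ s, u i ∈ S) ∧
      ∀ i < s, ∀ t : ℝ, 0 < t → t < 1 → t • u i + (1 - t) • u (i + 1) ∈ S := by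
  induction h with
  | refl => exact ⟨0, fun _ => x, rfl, rfl, fun _ _ => hx, fun _ h => absurd h (Nat.not_lt_zero _)⟩
  | @tail b c _ hbc ih =>
    obtain ⟨s, u, hu0, hus, hmem, hseg⟩ := ih
    refine ⟨s + 1, fun i => if i ≤ s then u i else c, by simp [hu0], by simp, fun i hi => ?_,
      fun i hi t ht0 ht1 => ?_⟩
    · dsimp only
      split_ifs with h
      · exact hmem i h
      · exact hbc (right_mem_segment ℝ b c)
    · dsimp only
      rcases (Nat.lt_succ_iff.1 hi).lt_or_eq with hi | rfl
      · rw [if_pos hi.le, if_pos (Nat.succ_le_of_lt hi)]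
        exact hseg i hi t ht0 ht1
      · rw [if_pos le_rfl, if_neg (Nat.not_succ_le_self i), hus]
        exact hbc ⟨t, 1 - t, ht0.le, by linarith, by ring, rfl⟩

/-- for every reciprocal matrix `A`, the set `E(A)` of efficient vectors is
PWL connected. -/
theorem Eset_PWLConnected {n : ℕ} (A : Matrix (Fin n) (Fin n) ℝ) (hA : IsReciprocal A) :
    PWLConnected (Eset A) := by
  intro x hx y hy
  refine exists_polygonal_path_of_reflTransGen hx ?_
  rcases isEmpty_or_nonempty (Fin n) with _ | ⟨⟨r⟩⟩
  · rw [Subsingleton.elim x y]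
  have : Std.Symm fun x y : Fin n → ℝ => segment ℝ x y ⊆ Eset A :=
    ⟨fun x y h => segment_symm ℝ y x ▸ h⟩
  exact (reflTransGen_segment_column hA hx r).trans (symm (reflTransGen_segment_column hA hy r))
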